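/- arXiv:2103.00468 — 3 statements merged into one kernel-verified Lean document; each statement's English description precedes it below -/
import Mathlib

section
/- The 8-point digital cycle H = {(0,−1),(0,0),(0,1),(1,1),(2,1),(2,0),(2,−1),(1,−1)} ⊂ ℤ² with 4-adjacency has digital Lusternik–Schnirelmann category cat₄(H) ≤ 2: the two 4-element arcs M₁ = {(0,0),(0,1),(1,1),(2,1)} and M₂ = {(0,−1),(2,0),(2,−1),(1,−1)} cover H and each inclusion M_i ↪ H is digitally 4-nullhomotopic. -/
/-- Digital continuity: adjacent-or-equal points map to adjacent-or-equal points. -/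
def DContinuous {X Y : Type*} (κX : X → X → Prop) (κY : Y → Y → Prop) (f : X → Y) : Prop :=
  ∀ x x' : X, (x = x' ∨ κX x x') → (f x = f x' ∨ κY (f x) (f x'))

/-- 2-adjacency on the digital interval `[0,m]`, modeled by `Fin (m+1)`. -/
def adjFin (m : ℕ) : Fin (m + 1) → Fin (m + 1) → Prop :=
  fun s t => (s : ℕ) + 1 = (t : ℕ) ∨ (t : ℕ) + 1 = (s : ℕ)

/-- Digital homotopy between maps `f g : (X,κX) → (Y,κY)`. -/
def DHomotopy {X Y : Type*} (κX : X → X → Prop) (κY : Y → Y → Prop) (f g : X → Y) : Prop :=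
  ∃ m : ℕ, ∃ F : X → Fin (m + 1) → Y,
    (∀ x, F x 0 = f x) ∧ (∀ x, F x (Fin.last m) = g x) ∧
    (∀ x, DContinuous (adjFin m) κY (F x)) ∧
    (∀ t, DContinuous κX κY (fun x => F x t))

def DNullhomotopic {X Y : Type*} (κX : X → X → Prop) (κY : Y → Y → Prop) (f : X → Y) : Prop :=
  ∃ y₀ : Y, DHomotopy κX κY f (fun _ => y₀)

def DContractible {X : Type*} (κ : X → X → Prop) : Prop :=
  DNullhomotopic κ κ (id : X → X)

def DConnected {X : Type*} (κ : X → X → Prop) : Prop :=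
  ∀ x y : X, Relation.ReflTransGen κ x y

/-- Adjacency restricted to a subset. -/
def subAdj {X : Type*} (κ : X → X → Prop) (S : Set X) : S → S → Prop :=
  fun a b => κ (a : X) (b : X)

/-- The (largest) cartesian product adjacency: each coordinate moves to an
adjacent-or-equal point. -/
def prodAdj {X Y : Type*} (κX : X → X → Prop) (κY : Y → Y → Prop) :
    X × Y → X × Y → Prop :=
  fun p q => (p.1 = q.1 ∨ κX p.1 q.1) ∧ (p.2 = q.2 ∨ κY p.2 q.2)

/-- The minimal cartesian product adjacency (`c₁`-style): exactly one coordinate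
moves to an adjacent point, the other stays fixed. -/
def minProdAdj {X Y : Type*} (κX : X → X → Prop) (κY : Y → Y → Prop) :
    X × Y → X × Y → Prop :=
  fun p q => (p.1 = q.1 ∧ κY p.2 q.2) ∨ (p.2 = q.2 ∧ κX p.1 q.1)

/-- Product adjacency on `n`-fold products: each coordinate adjacent or equal. -/
def piAdj {X : Type*} (κ : X → X → Prop) (n : ℕ) :
    (Fin n → X) → (Fin n → X) → Prop :=
  fun a b => ∀ i, a i = b i ∨ κ (a i) (b i)

/-- `X` admits a categorical cover by `k` subsets with nullhomotopic inclusions. -/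
def CatLe {X : Type*} (κ : X → X → Prop) (k : ℕ) : Prop :=
  ∃ U : Fin k → Set X, (∀ x, ∃ i, x ∈ U i) ∧
    ∀ i, DNullhomotopic (subAdj κ (U i)) κ (fun a : U i => (a : X))

/-- Digital Lusternik–Schnirelmann category. -/
noncomputable def dCat {X : Type*} (κ : X → X → Prop) : ℕ :=
  sInf {k | CatLe κ k}

/-- `p` admits a cover of the base by `k` subsets each with a strict digitally
continuous section. -/
def GenusLe {E B : Type*} (κE : E → E → Prop) (κB : B → B → Prop) (p : E → B) (k : ℕ) : Prop :=
  ∃ V : Fin k → Set B, (∀ b, ∃ i, b ∈ V i) ∧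
    ∀ i, ∃ s : V i → E, DContinuous (subAdj κB (V i)) κE s ∧ ∀ b : V i, p (s b) = (b : B)

/-- Digital Schwarz genus (of a digital fibration). -/
noncomputable def dGenus {E B : Type*} (κE : E → E → Prop) (κB : B → B → Prop) (p : E → B) : ℕ :=
  sInf {k | GenusLe κE κB p k}

/-- Genus with sections up to digital homotopy (the genus of a fibrational
substitute of an arbitrary digitally continuous map). -/
def HomGenusLe {E B : Type*} (κE : E → E → Prop) (κB : B → B → Prop) (p : E → B) (k : ℕ) : Prop :=
  ∃ V : Fin k → Set B, (∀ b, ∃ i, b ∈ V i) ∧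
    ∀ i, ∃ s : V i → E, DContinuous (subAdj κB (V i)) κE s ∧
      DHomotopy (subAdj κB (V i)) κB (fun b => p (s b)) (fun b : V i => (b : B))

/-- Digital higher topological complexity, via the diagonal `X → Xⁿ`. -/
noncomputable def dTC {X : Type*} (κ : X → X → Prop) (n : ℕ) : ℕ :=
  sInf {k | HomGenusLe κ (piAdj κ n) (fun x => fun _ : Fin n => x) k}

/-- The conditions making `F` a digital homotopy family (continuity in each variable). -/
def IsDHomotopyFamily {X Y : Type*} (κX : X → X → Prop) (κY : Y → Y → Prop) (m : ℕ)
    (F : X → Fin (m + 1) → Y) : Prop :=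
  (∀ x, DContinuous (adjFin m) κY (F x)) ∧ (∀ t, DContinuous κX κY (fun x => F x t))

/-- A digital fibration: a digitally continuous map with the digital homotopy
lifting property with respect to every digital image. -/
def DFibration {E B : Type*} (κE : E → E → Prop) (κB : B → B → Prop) (p : E → B) : Prop :=
  DContinuous κE κB p ∧
  ∀ (X : Type) (κX : X → X → Prop) (m : ℕ) (H : X → Fin (m + 1) → B) (f : X → E),
    IsDHomotopyFamily κX κB m H → DContinuous κX κE f → (∀ x, p (f x) = H x 0) →
    ∃ G : X → Fin (m + 1) → E,
      IsDHomotopyFamily κX κE m G ∧ (∀ x, G x 0 = f x) ∧ (∀ x t, p (G x t) = H x t)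

/-- A `κ`-topological group: a group structure on a digital image whose
multiplication (with the minimal product adjacency on the square) and
inversion are digitally continuous. -/
def IsDTopGroup {H : Type*} (κ : H → H → Prop) (mul : H → H → H) (one : H) (inv : H → H) : Prop :=
  (∀ a b c, mul (mul a b) c = mul a (mul b c)) ∧
  (∀ a, mul one a = a) ∧ (∀ a, mul a one = a) ∧
  (∀ a, mul (inv a) a = one) ∧ (∀ a, mul a (inv a) = one) ∧
  DContinuous (minProdAdj κ κ) κ (fun p => mul p.1 p.2) ∧
  DContinuous κ κ inv

/-- 2-adjacency on ℤ. -/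
def adjZ : ℤ → ℤ → Prop := fun a b => |a - b| = 1

/-- 4-adjacency (c₁-adjacency) on ℤ². -/
def adj4 : ℤ × ℤ → ℤ × ℤ → Prop :=
  fun p q => (p.1 = q.1 ∧ |p.2 - q.2| = 1) ∨ (p.2 = q.2 ∧ |p.1 - q.1| = 1)

/-- 8-adjacency (c₂-adjacency) on ℤ². -/
def adj8 : ℤ × ℤ → ℤ × ℤ → Prop :=
  fun p q => p ≠ q ∧ |p.1 - q.1| ≤ 1 ∧ |p.2 - q.2| ≤ 1

/-- The 8-point digital cycle in `ℤ²`. -/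
def cycleH : Set (ℤ × ℤ) :=
  {(0, -1), (0, 0), (0, 1), (1, 1), (2, 1), (2, 0), (2, -1), (1, -1)}

def arcM₁ : Set (ℤ × ℤ) := {(0, 0), (0, 1), (1, 1), (2, 1)}

def arcM₂ : Set (ℤ × ℤ) := {(0, -1), (2, 0), (2, -1), (1, -1)}


instance (p q : ℤ × ℤ) : Decidable (adj4 p q) := by unfold adj4; infer_instance

/-- Auxiliary: `adj4` is symmetric. -/
lemma adj4_symm {p q : ℤ × ℤ} (h : adj4 p q) : adj4 q p := by
  rcases h with ⟨h1, h2⟩ | ⟨h1, h2⟩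
  · exact Or.inl ⟨h1.symm, by rw [abs_sub_comm]; exact h2⟩
  · exact Or.inr ⟨h1.symm, by rw [abs_sub_comm]; exact h2⟩

/-- Generic nullhomotopy along an arc inside the cycle. -/
lemma nullArc {S : Type*} (path : ℕ → ℤ × ℤ) (idx : ℤ × ℤ → ℕ) (A : Set (ℤ × ℤ))
    (hcy : ∀ n, path n ∈ cycleH)
    (hstep : ∀ a, path a = path (a + 1) ∨ adj4 (path a) (path (a + 1)))
    (hfix : ∀ p, p ∈ A → path (idx p) = p)
    (hle : ∀ p, idx p ≤ 3)
    (hAdj : ∀ p q, p ∈ A → q ∈ A → adj4 p q → idx p + 1 = idx q ∨ idx q + 1 = idx p)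
    (κ : S → S → Prop) (v : S → ℤ × ℤ) (hv : ∀ a, v a ∈ A)
    (hκ : ∀ a b, κ a b → adj4 (v a) (v b)) (f : S → ↥cycleH)
    (hf : ∀ a, (f a : ℤ × ℤ) = v a) :
    DNullhomotopic κ (subAdj adj4 cycleH) f := by
  have key : ∀ a b : ℕ, (a = b ∨ a + 1 = b ∨ b + 1 = a) →
      path a = path b ∨ adj4 (path a) (path b) := by
    intro a b h
    rcases h with rfl | rfl | rfl
    · exact Or.inl rfl
    · exact hstep a
    · exact (hstep b).imp Eq.symm adj4_symm
  refine ⟨⟨path 0, hcy 0⟩, 3, fun a t => ⟨path (idx (v a) - t.1), hcy _⟩, ?_, ?_, ?_, ?_⟩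
  · intro a
    apply Subtype.ext
    show path (idx (v a) - (0 : Fin 4).1) = (f a : ℤ × ℤ)
    rw [hf]
    simpa using hfix _ (hv a)
  · intro a
    apply Subtype.ext
    show path (idx (v a) - (Fin.last 3).1) = path 0
    have h3 := hle (v a)
    have : idx (v a) - (Fin.last 3).1 = 0 := by simp [Fin.last]; omega
    rw [this]
  · intro a s t h
    rcases h with rfl | h
    · exact Or.inl rfl
    · have hk := key (idx (v a) - s.1) (idx (v a) - t.1) (by rcases h with h | h <;> omega)
      exact hk.imp (fun e => Subtype.ext e) (fun h => h)
  · intro t x x' h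
    rcases h with rfl | h
    · exact Or.inl rfl
    · have hi := hAdj _ _ (hv x) (hv x') (hκ _ _ h)
      have hk := key (idx (v x) - t.1) (idx (v x') - t.1) (by omega)
      exact hk.imp (fun e => Subtype.ext e) (fun h => h)

def path1 : ℕ → ℤ × ℤ
  | 0 => (0, 0) | 1 => (0, 1) | 2 => (1, 1) | _ + 3 => (2, 1)

def idx1 (p : ℤ × ℤ) : ℕ :=
  if p = (0, 1) then 1 else if p = (1, 1) then 2 else if p = (2, 1) then 3 else 0

def path2 : ℕ → ℤ × ℤ
  | 0 => (2, 0) | 1 => (2, -1) | 2 => (1, -1) | _ + 3 => (0, -1)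

def idx2 (p : ℤ × ℤ) : ℕ :=
  if p = (2, -1) then 1 else if p = (1, -1) then 2 else if p = (0, -1) then 3 else 0

lemma path1_cy : ∀ n, path1 n ∈ cycleH
  | 0 => by simp [path1, cycleH]
  | 1 => by simp [path1, cycleH]
  | 2 => by simp [path1, cycleH]
  | _ + 3 => by simp [path1, cycleH]

lemma path2_cy : ∀ n, path2 n ∈ cycleH
  | 0 => by simp [path2, cycleH]
  | 1 => by simp [path2, cycleH]
  | 2 => by simp [path2, cycleH]
  | _ + 3 => by simp [path2, cycleH]

lemma path1_step : ∀ a, path1 a = path1 (a + 1) ∨ adj4 (path1 a) (path1 (a + 1))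
  | 0 => Or.inr (by decide)
  | 1 => Or.inr (by decide)
  | 2 => Or.inr (by decide)
  | _ + 3 => Or.inl rfl

lemma path2_step : ∀ a, path2 a = path2 (a + 1) ∨ adj4 (path2 a) (path2 (a + 1))
  | 0 => Or.inr (by decide)
  | 1 => Or.inr (by decide)
  | 2 => Or.inr (by decide)
  | _ + 3 => Or.inl rfl

lemma mem_arc1 {p : ℤ × ℤ} (hp : p ∈ arcM₁) :
    p = (0, 0) ∨ p = (0, 1) ∨ p = (1, 1) ∨ p = (2, 1) := by
  simpa [arcM₁] using hp

lemma mem_arc2 {p : ℤ × ℤ} (hp : p ∈ arcM₂) :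
    p = (0, -1) ∨ p = (2, 0) ∨ p = (2, -1) ∨ p = (1, -1) := by
  simpa [arcM₂] using hp

lemma idx1_le (p : ℤ × ℤ) : idx1 p ≤ 3 := by unfold idx1; split_ifs <;> omega

lemma idx2_le (p : ℤ × ℤ) : idx2 p ≤ 3 := by unfold idx2; split_ifs <;> omega

lemma path1_fix : ∀ p ∈ arcM₁, path1 (idx1 p) = p := by
  intro p hp
  rcases mem_arc1 hp with rfl | rfl | rfl | rfl <;> decide

lemma path2_fix : ∀ p ∈ arcM₂, path2 (idx2 p) = p := by
  intro p hp
  rcases mem_arc2 hp with rfl | rfl | rfl | rfl <;> decide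

lemma arcAdj1 : ∀ p q, p ∈ arcM₁ → q ∈ arcM₁ → adj4 p q →
    idx1 p + 1 = idx1 q ∨ idx1 q + 1 = idx1 p := by
  intro p q hp hq
  rcases mem_arc1 hp with rfl | rfl | rfl | rfl <;>
    rcases mem_arc1 hq with rfl | rfl | rfl | rfl <;> decide

lemma arcAdj2 : ∀ p q, p ∈ arcM₂ → q ∈ arcM₂ → adj4 p q →
    idx2 p + 1 = idx2 q ∨ idx2 q + 1 = idx2 p := by
  intro p q hp hq
  rcases mem_arc2 hp with rfl | rfl | rfl | rfl <;>
    rcases mem_arc2 hq with rfl | rfl | rfl | rfl <;> decide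

lemma null_arc1 {S : Type*} (κ : S → S → Prop) (v : S → ℤ × ℤ) (hv : ∀ a, v a ∈ arcM₁)
    (hκ : ∀ a b, κ a b → adj4 (v a) (v b)) (f : S → ↥cycleH)
    (hf : ∀ a, (f a : ℤ × ℤ) = v a) :
    DNullhomotopic κ (subAdj adj4 cycleH) f :=
  nullArc path1 idx1 arcM₁ path1_cy path1_step path1_fix idx1_le arcAdj1 κ v hv hκ f hf

lemma null_arc2 {S : Type*} (κ : S → S → Prop) (v : S → ℤ × ℤ) (hv : ∀ a, v a ∈ arcM₂)
    (hκ : ∀ a b, κ a b → adj4 (v a) (v b)) (f : S → ↥cycleH)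
    (hf : ∀ a, (f a : ℤ × ℤ) = v a) :
    DNullhomotopic κ (subAdj adj4 cycleH) f :=
  nullArc path2 idx2 arcM₂ path2_cy path2_step path2_fix idx2_le arcAdj2 κ v hv hκ f hf

lemma arc1_subset : arcM₁ ⊆ cycleH := by
  intro p hp
  rcases mem_arc1 hp with rfl | rfl | rfl | rfl <;> simp [cycleH]

lemma arc2_subset : arcM₂ ⊆ cycleH := by
  intro p hp
  rcases mem_arc2 hp with rfl | rfl | rfl | rfl <;> simp [cycleH]

lemma union_eq : arcM₁ ∪ arcM₂ = cycleH := by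
  ext p
  simp [arcM₁, arcM₂, cycleH]
  tauto

/-- the two arcs cover the 8-point 4-adjacency cycle `H`, each
inclusion is digitally 4-nullhomotopic, and hence `cat₄(H) ≤ 2`. -/
theorem cycle_cat_le_two :
    arcM₁ ∪ arcM₂ = cycleH ∧
    (∃ h₁ : arcM₁ ⊆ cycleH,
      DNullhomotopic (subAdj adj4 arcM₁) (subAdj adj4 cycleH) (Set.inclusion h₁)) ∧
    (∃ h₂ : arcM₂ ⊆ cycleH,
      DNullhomotopic (subAdj adj4 arcM₂) (subAdj adj4 cycleH) (Set.inclusion h₂)) ∧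
    dCat (subAdj adj4 cycleH) ≤ 2 := by
  refine ⟨union_eq, ⟨arc1_subset, ?_⟩, ⟨arc2_subset, ?_⟩, ?_⟩
  · exact null_arc1 (subAdj adj4 arcM₁) (fun a => a.1) (fun a => a.2) (fun _ _ h => h)
      (Set.inclusion arc1_subset) (fun a => rfl)
  · exact null_arc2 (subAdj adj4 arcM₂) (fun a => a.1) (fun a => a.2) (fun _ _ h => h)
      (Set.inclusion arc2_subset) (fun a => rfl)
  · apply Nat.sInf_le
    refine ⟨![{a | (a : ℤ × ℤ) ∈ arcM₁}, {a | (a : ℤ × ℤ) ∈ arcM₂}], ?_, ?_⟩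
    · intro x
      have hx : (x : ℤ × ℤ) ∈ arcM₁ ∪ arcM₂ := by rw [union_eq]; exact x.2
      rcases hx with h | h
      · exact ⟨0, h⟩
      · exact ⟨1, h⟩
    · intro i
      fin_cases i <;>
        simp only [Matrix.cons_val_zero, Matrix.cons_val_one, Matrix.head_cons]
      · exact null_arc1 _ (fun a : {x : ↥cycleH // (x : ℤ × ℤ) ∈ arcM₁} => (a.1.1 : ℤ × ℤ))
          (fun a => a.2) (fun _ _ h => h) (fun a => a.1) (fun a => rfl)
      · exact null_arc2 _ (fun a : {x : ↥cycleH // (x : ℤ × ℤ) ∈ arcM₂} => (a.1.1 : ℤ × ℤ))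
          (fun a => a.2) (fun _ _ h => h) (fun a => a.1) (fun a => rfl)
end

section
/- For any digital fibration p : (E, λ₂) → (B, λ₃), the digital Schwarz genus of p is at most the digital Lusternik–Schnirelmann category of the base: genus_{λ₂,λ₃}(p) ≤ cat_{λ₃}(B). -/
/-- for a digital fibration `p : (E,lam₂) → (B,lam₃)`,
`genus(p) ≤ cat(B)`. -/
theorem dGenus_le_dCat {E B : Type*} [Finite E] [Finite B] [Nonempty E] [Nonempty B]
    (lam₂ : E → E → Prop) (lam₃ : B → B → Prop) (p : E → B) (hp : DFibration lam₂ lam₃ p) :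
    dGenus lam₂ lam₃ p ≤ dCat lam₃ := by
  by_cases hg : {k | GenusLe lam₂ lam₃ p k}.Nonempty
  · -- p is surjective
    obtain ⟨k0, V, hcov, hsec⟩ := hg
    have hsurj : ∀ b : B, ∃ e, p e = b := by
      intro b
      obtain ⟨i, hb⟩ := hcov b
      obtain ⟨s, _, hs⟩ := hsec i
      exact ⟨s ⟨b, hb⟩, hs ⟨b, hb⟩⟩
    -- the cat set is nonempty (cover by singletons)
    have hcat : {k | CatLe lam₃ k}.Nonempty := by
      obtain ⟨n, ⟨e⟩⟩ := Finite.exists_equiv_fin B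
      refine ⟨n, fun i => {e.symm i}, fun b => ⟨e b, by simp⟩, ?_⟩
      intro i
      refine ⟨e.symm i, 0, fun a _ => (a : B), fun a => rfl, ?_, ?_, ?_⟩
      · intro a
        have h2 := a.2
        simp only [Set.mem_singleton_iff] at h2
        exact h2
      · intro a s t _; left; rfl
      · intro t a b _; left
        have ha := a.2; have hb := b.2
        simp only [Set.mem_singleton_iff] at ha hb
        show (a : B) = (b : B)
        rw [ha, hb]
    -- CatLe implies GenusLe
    have main : ∀ k, CatLe lam₃ k → GenusLe lam₂ lam₃ p k := by
      rintro k ⟨U, hU, hnull⟩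
      refine ⟨U, hU, ?_⟩
      intro i
      obtain ⟨y₀, m, F, hF0, hFl, hFt, hFx⟩ := hnull i
      obtain ⟨e₀, he₀⟩ := hsurj y₀
      -- reverse the homotopy
      have hlt : ∀ t : Fin (m+1), m - (t:ℕ) < m + 1 := by intro t; omega
      set rev : Fin (m+1) → Fin (m+1) := fun t => ⟨m - (t:ℕ), hlt t⟩ with hrevdef
      have hrevadj : ∀ s t, adjFin m s t → adjFin m (rev s) (rev t) := by
        intro s t h
        have hs := s.isLt; have ht := t.isLt
        simp only [adjFin, rev] at *
        omega
      have hrev0 : rev 0 = Fin.last m := by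
        apply Fin.ext; simp [rev]
      have hrevlast : rev (Fin.last m) = 0 := by
        apply Fin.ext; simp [rev]
      -- transport the subtype to a Fin type (HLP quantifies over Type 0)
      obtain ⟨n, ⟨ε⟩⟩ := Finite.exists_equiv_fin (U i)
      set κX : Fin n → Fin n → Prop :=
        fun a b => subAdj lam₃ (U i) (ε.symm a) (ε.symm b) with hκX
      set H : Fin n → Fin (m+1) → B := fun a t => F (ε.symm a) (rev t) with hHdef
      have hfam : IsDHomotopyFamily κX lam₃ m H := by
        constructor
        · intro a s t hst
          rcases hst with h | h
          · left; rw [h]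
          · exact hFt (ε.symm a) (rev s) (rev t) (Or.inr (hrevadj s t h))
        · intro t a b hab
          rcases hab with h | h
          · left; rw [h]
          · exact hFx (rev t) (ε.symm a) (ε.symm b) (Or.inr h)
      have hfcont : DContinuous κX lam₂ (fun _ : Fin n => e₀) := by
        intro a b _; left; rfl
      have hstart : ∀ a : Fin n, p ((fun _ : Fin n => e₀) a) = H a 0 := by
        intro a
        simp only [H, hrev0, hFl, he₀]
      obtain ⟨G, hGfam, hG0, hGp⟩ := hp.2 (Fin n) κX m H (fun _ => e₀) hfam hfcont hstart
      refine ⟨fun x => G (ε x) (Fin.last m), ?_, ?_⟩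
      · intro x x' hx
        have hc := hGfam.2 (Fin.last m) (ε x) (ε x')
        apply hc
        rcases hx with h | h
        · left; rw [h]
        · right
          simp only [κX, Equiv.symm_apply_apply]
          exact h
      · intro b
        have := hGp (ε b) (Fin.last m)
        rw [this]
        simp only [H, hrevlast, Equiv.symm_apply_apply, hF0]
    have hcd : CatLe lam₃ (dCat lam₃) := Nat.sInf_mem hcat
    exact Nat.sInf_le (main _ hcd)
  · have : {k | GenusLe lam₂ lam₃ p k} = ∅ := Set.not_nonempty_iff_eq_empty.mp hg
    simp [dGenus, this, Nat.sInf_empty]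
end

section
/- The 8-point digital cycle H ⊂ ℤ² with 4-adjacency (listed as a=(0,−1), b=(0,0), c=(0,1), d=(1,1), e=(2,1), f=(2,0), g=(2,−1), h=(1,−1)), equipped with the cyclic group structure of order 8 in which b is the identity and a is a generator, is a 4-topological group, and TC₂(H, 4) = cat₄(H) = 2. -/
/-- Enumeration of the cycle: `0 ↦ a, 1 ↦ b, …, 7 ↦ h`. -/
def cyc : ZMod 8 → ℤ × ℤ := fun i =>
  ![((0 : ℤ), (-1 : ℤ)), (0, 0), (0, 1), (1, 1), (2, 1), (2, 0), (2, -1), (1, -1)]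
    ⟨i.val, i.val_lt⟩

/-- 4-adjacency transported to the index set of the cycle. -/
def adjCyc : ZMod 8 → ZMod 8 → Prop := fun i j => adj4 (cyc i) (cyc j)


/-! ### Auxiliary decidability instances -/

instance adj4dec : ∀ p q, Decidable (adj4 p q) := by unfold adj4; infer_instance
instance adjCycDec : ∀ i j, Decidable (adjCyc i j) := by unfold adjCyc; infer_instance
instance adjFinDec : ∀ m (s t : Fin (m+1)), Decidable (adjFin m s t) := by
  unfold adjFin; infer_instance
instance piAdjDec : ∀ (a b : Fin 2 → ZMod 8), Decidable (piAdj adjCyc 2 a b) := by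
  unfold piAdj; infer_instance

/-! ### Degree theory on the 8-cycle -/

def Lrep : ZMod 8 → ℤ := fun x => if x.val ≤ 4 then (x.val : ℤ) else (x.val : ℤ) - 8

noncomputable def degC (f : ZMod 8 → ZMod 8) : ℤ := ∑ i : ZMod 8, Lrep (f (i+1) - f i)

lemma degC_id : degC (fun x => x) = 8 := by unfold degC; decide

lemma degC_const (c : ZMod 8) : degC (fun _ => c) = 0 := by unfold degC; revert c; decide

lemma adjCyc_iff : ∀ i j : ZMod 8, adjCyc i j ↔ (j = i + 1 ∨ j = i - 1) := by decide

lemma Lkey : ∀ a b c d : ZMod 8,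
    (a = 0 ∨ a = 1 ∨ a = -1) → (b = 0 ∨ b = 1 ∨ b = -1) →
    (c = 0 ∨ c = 1 ∨ c = -1) → (d = 0 ∨ d = 1 ∨ d = -1) →
    a - b = c - d → Lrep a - Lrep b = Lrep c - Lrep d := by decide

lemma sum_shift {M : Type*} [AddCommGroup M] (h : ZMod 8 → M) :
    ∑ i : ZMod 8, (h (i+1) - h i) = 0 := by
  rw [Finset.sum_sub_distrib]
  have : ∑ x : ZMod 8, h (x + 1) = ∑ x : ZMod 8, h x :=
    Fintype.sum_equiv (Equiv.addRight (1 : ZMod 8)) _ h (fun i => rfl)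
  rw [this]; simp

lemma close_mem {x y : ZMod 8} (h : x = y ∨ adjCyc x y) :
    y - x = 0 ∨ y - x = 1 ∨ y - x = -1 := by
  rcases h with h | h
  · left; rw [h]; ring
  · rcases (adjCyc_iff x y).1 h with h | h
    · right; left; rw [h]; ring
    · right; right; rw [h]; ring

lemma step_mem {f : ZMod 8 → ZMod 8} (hf : DContinuous adjCyc adjCyc f) (i : ZMod 8) :
    f (i+1) - f i = 0 ∨ f (i+1) - f i = 1 ∨ f (i+1) - f i = -1 :=
  close_mem (hf i (i+1) (Or.inr ((adjCyc_iff i (i+1)).2 (Or.inl rfl))))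

lemma degC_step {f g : ZMod 8 → ZMod 8} (hf : DContinuous adjCyc adjCyc f)
    (hg : DContinuous adjCyc adjCyc g) (hfg : ∀ x, f x = g x ∨ adjCyc (f x) (g x)) :
    degC f = degC g := by
  have key : ∀ i : ZMod 8, Lrep (g (i+1) - g i) - Lrep (f (i+1) - f i)
      = Lrep (g (i+1) - f (i+1)) - Lrep (g i - f i) := by
    intro i
    have h1 := step_mem hg i
    have h2 := step_mem hf i
    have h3 := close_mem (hfg (i+1))
    have h4 := close_mem (hfg i)
    exact Lkey _ _ _ _ h1 h2 h3 h4 (by ring)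
  have hsum : ∑ i : ZMod 8, (Lrep (g (i+1) - f (i+1)) - Lrep (g i - f i)) = 0 := by
    simpa using sum_shift (fun j => Lrep (g j - f j))
  have h2' : ∑ i : ZMod 8, (Lrep (g (i+1) - g i) - Lrep (f (i+1) - f i)) = 0 := by
    rw [Finset.sum_congr rfl (fun i _ => key i)]; exact hsum
  have h3' : degC g - degC f = 0 := by
    unfold degC; rw [← Finset.sum_sub_distrib]; exact h2'
  omega

lemma degC_homotopy {m : ℕ} (G : ZMod 8 → Fin (m+1) → ZMod 8)
    (h1 : ∀ x, DContinuous (adjFin m) adjCyc (G x))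
    (h2 : ∀ t, DContinuous adjCyc adjCyc (fun x => G x t)) :
    ∀ t, degC (fun x => G x t) = degC (fun x => G x 0) := by
  intro t
  induction t using Fin.induction with
  | zero => rfl
  | succ k ih =>
    rw [← ih]
    exact (degC_step (h2 k.castSucc) (h2 k.succ)
      (fun x => h1 x k.castSucc k.succ (Or.inr (Or.inl (by simp [adjFin]))))).symm

/-! ### Lower bounds -/

lemma not_catle_one : ¬ CatLe adjCyc 1 := by
  rintro ⟨U, hcov, hnull⟩
  have mem : ∀ x : ZMod 8, x ∈ U 0 := by
    intro x
    obtain ⟨i, hi⟩ := hcov x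
    have : i = 0 := Subsingleton.elim i 0
    rwa [this] at hi
  obtain ⟨y₀, m, F, h0, hl, hc1, hc2⟩ := hnull 0
  set G : ZMod 8 → Fin (m+1) → ZMod 8 := fun x t => F ⟨x, mem x⟩ t with hG
  have g1 : ∀ x, DContinuous (adjFin m) adjCyc (G x) := fun x => hc1 ⟨x, mem x⟩
  have g2 : ∀ t, DContinuous adjCyc adjCyc (fun x => G x t) := by
    intro t x x' h
    refine hc2 t ⟨x, mem x⟩ ⟨x', mem x'⟩ ?_
    rcases h with h | h
    · exact Or.inl (Subtype.ext h)
    · exact Or.inr h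
  have := degC_homotopy G g1 g2 (Fin.last m)
  have e1 : (fun x => G x (Fin.last m)) = (fun _ => y₀) := funext fun x => hl ⟨x, mem x⟩
  have e2 : (fun x => G x 0) = (fun x : ZMod 8 => x) := funext fun x => h0 ⟨x, mem x⟩
  rw [e1, e2, degC_id, degC_const] at this
  norm_num at this

lemma not_catle_zero : ¬ CatLe adjCyc 0 := by
  rintro ⟨U, hcov, -⟩
  obtain ⟨i, -⟩ := hcov 0
  exact i.elim0

def diagMap : ZMod 8 → (Fin 2 → ZMod 8) := fun x => fun j => if j = 0 then x else 1

lemma not_homgenusle_one :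
    ¬ HomGenusLe adjCyc (piAdj adjCyc 2) (fun x => fun _ : Fin 2 => x) 1 := by
  rintro ⟨V, hcov, hsec⟩
  have mem : ∀ b, b ∈ V 0 := by
    intro b
    obtain ⟨i, hi⟩ := hcov b
    have : i = 0 := Subsingleton.elim i 0
    rwa [this] at hi
  obtain ⟨s, -, m, F, h0, hl, hc1, hc2⟩ := hsec 0
  have bx_adj : ∀ x x' : ZMod 8, adjCyc x x' → piAdj adjCyc 2 (diagMap x) (diagMap x') := by
    intro x x' h i
    fin_cases i
    · exact Or.inr h
    · exact Or.inl rfl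
  have hyp : ∀ x x' : ZMod 8, (x = x' ∨ adjCyc x x') →
      ((⟨diagMap x, mem _⟩ : V 0) = ⟨diagMap x', mem _⟩ ∨
        subAdj (piAdj adjCyc 2) (V 0) ⟨diagMap x, mem _⟩ ⟨diagMap x', mem _⟩) := by
    intro x x' h
    rcases h with rfl | h
    · exact Or.inl rfl
    · exact Or.inr (bx_adj x x' h)
  -- chain in coordinate `j`
  have coordChain : ∀ j : Fin 2,
      degC (fun x => F ⟨diagMap x, mem _⟩ (Fin.last m) j)
        = degC (fun x => F ⟨diagMap x, mem _⟩ 0 j) := by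
    intro j
    refine degC_homotopy (fun x t => F ⟨diagMap x, mem _⟩ t j) ?_ ?_ (Fin.last m)
    · intro x t t' h
      rcases hc1 ⟨diagMap x, mem _⟩ t t' h with e | a
      · exact Or.inl (congrFun e j)
      · exact a j
    · intro t x x' h
      rcases hc2 t ⟨diagMap x, mem _⟩ ⟨diagMap x', mem _⟩ (hyp x x' h) with e | a
      · exact Or.inl (congrFun e j)
      · exact a j
  have e0 : ∀ (j : Fin 2) x, F ⟨diagMap x, mem _⟩ 0 j = s ⟨diagMap x, mem _⟩ := by
    intro j x
    rw [h0 ⟨diagMap x, mem _⟩]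
  have c0 := coordChain 0
  have c1 := coordChain 1
  have el0 : (fun x => F ⟨diagMap x, mem _⟩ (Fin.last m) (0 : Fin 2))
      = (fun x : ZMod 8 => x) := by
    funext x
    rw [hl ⟨diagMap x, mem _⟩]
    rfl
  have el1 : (fun x => F ⟨diagMap x, mem _⟩ (Fin.last m) (1 : Fin 2))
      = (fun _ : ZMod 8 => (1 : ZMod 8)) := by
    funext x
    rw [hl ⟨diagMap x, mem _⟩]
    rfl
  have er0 : (fun x => F ⟨diagMap x, mem _⟩ 0 (0 : Fin 2))
      = (fun x => s ⟨diagMap x, mem _⟩) := funext fun x => e0 0 x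
  have er1 : (fun x => F ⟨diagMap x, mem _⟩ 0 (1 : Fin 2))
      = (fun x => s ⟨diagMap x, mem _⟩) := funext fun x => e0 1 x
  rw [el0, er0, degC_id] at c0
  rw [el1, er1, degC_const] at c1
  rw [← c0] at c1
  norm_num at c1

lemma not_homgenusle_zero :
    ¬ HomGenusLe adjCyc (piAdj adjCyc 2) (fun x => fun _ : Fin 2 => x) 0 := by
  rintro ⟨V, hcov, -⟩
  obtain ⟨i, -⟩ := hcov (fun _ => 0)
  exact i.elim0

/-! ### Upper bound: categorical cover -/

def arc0 : Set (ZMod 8) := {x | x.val ≤ 4}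
def arc1 : Set (ZMod 8) := {x | 4 ≤ x.val ∨ x = 0}
instance : DecidablePred (· ∈ arc0) := fun x => (inferInstance : Decidable (x.val ≤ 4))
instance : DecidablePred (· ∈ arc1) := fun x =>
  (inferInstance : Decidable (4 ≤ x.val ∨ x = 0))

def Farc0 : arc0 → Fin 5 → ZMod 8 := fun u t => ((min (u.1.val + t.val) 4 : ℕ) : ZMod 8)
def Farc1 : arc1 → Fin 5 → ZMod 8 := fun u t =>
  ((4 + (max ((if u.1 = 0 then 4 else u.1.val - 4) - t.val) 0) : ℕ) : ZMod 8)

lemma null_arc0 : DNullhomotopic (subAdj adjCyc arc0) adjCyc (fun a : arc0 => (a : ZMod 8)) := by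
  refine ⟨(4 : ZMod 8), 4, Farc0, ?_, ?_, ?_, ?_⟩
  · decide
  · decide
  · unfold DContinuous; decide
  · unfold DContinuous subAdj; decide

lemma null_arc1_s19 : DNullhomotopic (subAdj adjCyc arc1) adjCyc (fun a : arc1 => (a : ZMod 8)) := by
  refine ⟨(4 : ZMod 8), 4, Farc1, ?_, ?_, ?_, ?_⟩
  · decide
  · decide
  · unfold DContinuous; decide
  · unfold DContinuous subAdj; decide

lemma catle_two : CatLe adjCyc 2 := by
  refine ⟨![arc0, arc1], ?_, ?_⟩
  · intro x
    by_cases h : x.val ≤ 4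
    · exact ⟨0, h⟩
    · exact ⟨1, Or.inl (by omega)⟩
  · intro i
    fin_cases i
    · exact null_arc0
    · exact null_arc1_s19

/-! ### Upper bound: motion planning cover -/

def W0 : Set (Fin 2 → ZMod 8) := {p | (p 1 - p 0).val ≤ 4}
def W1 : Set (Fin 2 → ZMod 8) := {p | 4 ≤ (p 1 - p 0).val}
instance : DecidablePred (· ∈ W0) := fun p =>
  (inferInstance : Decidable ((p 1 - p 0).val ≤ 4))
instance : DecidablePred (· ∈ W1) := fun p =>
  (inferInstance : Decidable (4 ≤ (p 1 - p 0).val))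

def GW0 : W0 → Fin 5 → (Fin 2 → ZMod 8) := fun p t j =>
  if j = 0 then p.1 0 else p.1 0 + ((min t.val (p.1 1 - p.1 0).val : ℕ) : ZMod 8)
def GW1 : W1 → Fin 5 → (Fin 2 → ZMod 8) := fun p t j =>
  if j = 0 then p.1 0 else p.1 0 - ((min t.val (8 - (p.1 1 - p.1 0).val) : ℕ) : ZMod 8)

lemma sec_cont (W : Set (Fin 2 → ZMod 8)) :
    DContinuous (subAdj (piAdj adjCyc 2) W) adjCyc (fun p : W => p.1 0) := by
  intro p p' h
  rcases h with h | h
  · exact Or.inl (congrArg (fun q : W => q.1 0) h)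
  · exact h 0

lemma sec_W0 : ∃ s : W0 → ZMod 8,
    DContinuous (subAdj (piAdj adjCyc 2) W0) adjCyc s ∧
      DHomotopy (subAdj (piAdj adjCyc 2) W0) (piAdj adjCyc 2)
        (fun b => (fun x => fun _ : Fin 2 => x) (s b)) (fun b : W0 => (b : Fin 2 → ZMod 8)) := by
  refine ⟨fun p => p.1 0, sec_cont W0, 4, GW0, ?_, ?_, ?_, ?_⟩
  · decide
  · decide
  · unfold DContinuous; decide
  · unfold DContinuous subAdj; decide

lemma sec_W1 : ∃ s : W1 → ZMod 8,
    DContinuous (subAdj (piAdj adjCyc 2) W1) adjCyc s ∧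
      DHomotopy (subAdj (piAdj adjCyc 2) W1) (piAdj adjCyc 2)
        (fun b => (fun x => fun _ : Fin 2 => x) (s b)) (fun b : W1 => (b : Fin 2 → ZMod 8)) := by
  refine ⟨fun p => p.1 0, sec_cont W1, 4, GW1, ?_, ?_, ?_, ?_⟩
  · decide
  · decide
  · unfold DContinuous; decide
  · unfold DContinuous subAdj; decide

lemma homgenusle_two :
    HomGenusLe adjCyc (piAdj adjCyc 2) (fun x => fun _ : Fin 2 => x) 2 := by
  refine ⟨![W0, W1], ?_, ?_⟩
  · intro p
    by_cases h : (p 1 - p 0).val ≤ 4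
    · exact ⟨0, h⟩
    · exact ⟨1, le_of_lt (Nat.lt_of_not_le h)⟩
  · intro i
    fin_cases i
    · exact sec_W0
    · exact sec_W1

lemma sInf_eq_two {S : Set ℕ} (h2 : 2 ∈ S) (h0 : 0 ∉ S) (h1 : 1 ∉ S) : sInf S = 2 := by
  refine le_antisymm (Nat.sInf_le h2) (le_csInf ⟨2, h2⟩ ?_)
  intro m hm
  rcases Nat.lt_or_ge m 2 with h | h
  · interval_cases m
    · exact absurd hm h0
    · exact absurd hm h1
  · exact h

lemma iter_sub (k : ℕ) (x : ZMod 8) :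
    (fun x : ZMod 8 => (0 : ZMod 8) + x - 1)^[k] x = x - k := by
  induction k with
  | zero => simp
  | succ n ih =>
    rw [Function.iterate_succ_apply', ih]
    push_cast
    ring

set_option maxRecDepth 100000

/-- the 8-point 4-adjacency cycle `H`, with the cyclic group
structure of order 8 (`x ∘ y = x + y - 1` on indices, so `b` (index 1) is the
identity and `a` (index 0) is a generator), is a 4-topological group, and
`TC₂(H,4) = cat₄(H) = 2`. -/
theorem cycle_topological_group_TC_two :
    Function.Injective cyc ∧ Set.range cyc = cycleH ∧
    cyc 1 = (0, 0) ∧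
    (∀ j : ZMod 8, ∃ k : ℕ, (fun x : ZMod 8 => (0 : ZMod 8) + x - 1)^[k] 1 = j) ∧
    IsDTopGroup adjCyc (fun i j : ZMod 8 => i + j - 1) 1 (fun i : ZMod 8 => 2 - i) ∧
    dTC adjCyc 2 = 2 ∧ dCat adjCyc = 2 := by
  refine ⟨by decide, ?_, by decide, ?_, ?_, ?_, ?_⟩
  · -- range
    ext p
    simp only [Set.mem_range, cycleH, Set.mem_insert_iff, Set.mem_singleton_iff]
    constructor
    · rintro ⟨i, rfl⟩
      revert i
      decide
    · rintro (rfl | rfl | rfl | rfl | rfl | rfl | rfl | rfl)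
      exacts [⟨0, by decide⟩, ⟨1, by decide⟩, ⟨2, by decide⟩, ⟨3, by decide⟩,
        ⟨4, by decide⟩, ⟨5, by decide⟩, ⟨6, by decide⟩, ⟨7, by decide⟩]
  · -- generator
    intro j
    refine ⟨(1 - j).val, ?_⟩
    rw [iter_sub]
    rw [ZMod.natCast_val, ZMod.cast_id]
    ring
  · -- topological group
    refine ⟨fun a b c => by ring, fun a => by ring, fun a => by ring,
      fun a => by ring, fun a => by ring, ?_, ?_⟩
    · unfold DContinuous minProdAdj; decide
    · unfold DContinuous; decide
  · -- dTC = 2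
    exact sInf_eq_two homgenusle_two not_homgenusle_zero not_homgenusle_one
  · -- dCat = 2
    exact sInf_eq_two catle_two not_catle_zero not_catle_one
end
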